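/- arXiv:2404.12789 — 2 statements merged into one kernel-verified Lean document; each statement's English description precedes it below -/
import Mathlib

section
/- For all nonnegative integers k and m, the (k+m+1)-st iterated derivative at 0 of the function f : ℝ → ℝ defined by f(x) = e^x · q_{k,m}(x) − p_{k,m}(x) equals (−1)^m · k! · m! / (k+m)!. Consequently the leading error term of the Padé approximant r_{k,m} = p_{k,m}/q_{k,m} to e^x is (−1)^m · (k!·m!)/((k+m)!·(k+m+1)!) · x^{k+m+1}. -/
open Finset

/-- Numerator of the `(k,m)` Padé approximant to the exponential. -/
noncomputable def padeP (k m : ℕ) (x : ℝ) : ℝ :=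
  ∑ j ∈ Finset.range (k + 1),
    ((Nat.factorial (k + m - j) * Nat.factorial k : ℝ) /
      (Nat.factorial (k + m) * Nat.factorial (k - j) * Nat.factorial j)) * x ^ j

/-- Denominator of the `(k,m)` Padé approximant to the exponential. -/
noncomputable def padeQ (k m : ℕ) (x : ℝ) : ℝ :=
  ∑ j ∈ Finset.range (m + 1),
    ((Nat.factorial (k + m - j) * Nat.factorial m : ℝ) /
      (Nat.factorial (k + m) * Nat.factorial (m - j) * Nat.factorial j)) * (-x) ^ j

/- ### Auxiliary lemmas -/

private lemma factCastR (n : ℕ) : (Nat.factorial (n+1) : ℝ) = ((n:ℝ)+1) * Nat.factorial n := by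
  rw [Nat.factorial_succ]; push_cast; ring

private lemma factNZ (n : ℕ) : (Nat.factorial n : ℝ) ≠ 0 :=
  Nat.cast_ne_zero.mpr (Nat.factorial_ne_zero n)

private lemma hasDerivAt_padeQ (k m : ℕ) (x : ℝ) :
    HasDerivAt (fun y => padeQ k m y)
      (∑ j ∈ Finset.range (m + 1),
        ((Nat.factorial (k + m - j) * Nat.factorial m : ℝ) /
          (Nat.factorial (k + m) * Nat.factorial (m - j) * Nat.factorial j)) *
            (((j : ℝ) * (-x) ^ (j - 1)) * (-1))) x := by
  simp only [padeQ]
  apply HasDerivAt.fun_sum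
  intro j _
  exact (((hasDerivAt_pow j (-x)).comp x (hasDerivAt_neg x))).const_mul _

private lemma hasDerivAt_padeP (k m : ℕ) (x : ℝ) :
    HasDerivAt (fun y => padeP k m y)
      (∑ j ∈ Finset.range (k + 1),
        ((Nat.factorial (k + m - j) * Nat.factorial k : ℝ) /
          (Nat.factorial (k + m) * Nat.factorial (k - j) * Nat.factorial j)) *
            ((j : ℝ) * x ^ (j - 1))) x := by
  simp only [padeP]
  apply HasDerivAt.fun_sum
  intro j _
  exact (hasDerivAt_pow j x).const_mul _

private lemma keyP (k m : ℕ) (x : ℝ) :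
    (∑ j ∈ Finset.range (k + 1 + 1),
      ((Nat.factorial (k + 1 + m - j) * Nat.factorial (k + 1) : ℝ) /
        (Nat.factorial (k + 1 + m) * Nat.factorial (k + 1 - j) * Nat.factorial j)) *
          ((j : ℝ) * x ^ (j - 1)))
    = ((k : ℝ) + 1) / ((k : ℝ) + m + 1) * padeP k m x := by
  rw [Finset.sum_range_succ']
  simp only [Nat.cast_zero, zero_mul, mul_zero, add_zero]
  rw [padeP, Finset.mul_sum]
  refine Finset.sum_congr rfl ?_
  intro j hj
  rw [Finset.mem_range] at hj
  rw [show k + 1 + m - (j + 1) = k + m - j from by omega,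
      show k + 1 - (j + 1) = k - j from by omega,
      show k + 1 + m = (k + m) + 1 from by omega,
      Nat.add_sub_cancel,
      factCastR (k + m), factCastR k, factCastR j]
  have h1 := factNZ (k + m - j); have h2 := factNZ (k + m); have h3 := factNZ (k - j)
  have h4 := factNZ j; have h5 := factNZ k
  have h6 : ((k : ℝ) + m + 1) ≠ 0 := by positivity
  have h7 : ((j : ℝ) + 1) ≠ 0 := by positivity
  push_cast
  field_simp

private lemma keyQ (k m : ℕ) (x : ℝ) :
    padeQ (k + 1) m x +
      (∑ j ∈ Finset.range (m + 1),
        ((Nat.factorial (k + 1 + m - j) * Nat.factorial m : ℝ) /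
          (Nat.factorial (k + 1 + m) * Nat.factorial (m - j) * Nat.factorial j)) *
            (((j : ℝ) * (-x) ^ (j - 1)) * (-1)))
    = ((k : ℝ) + 1) / ((k : ℝ) + m + 1) * padeQ k m x := by
  rw [Finset.sum_range_succ' (fun j => ((Nat.factorial (k + 1 + m - j) * Nat.factorial m : ℝ) /
          (Nat.factorial (k + 1 + m) * Nat.factorial (m - j) * Nat.factorial j)) *
            (((j : ℝ) * (-x) ^ (j - 1)) * (-1)))]
  simp only [Nat.cast_zero, zero_mul, mul_zero, add_zero]
  rw [padeQ, padeQ, Finset.mul_sum, Finset.sum_range_succ, Finset.sum_range_succ]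
  have hlast :
      ((Nat.factorial (k + 1 + m - m) * Nat.factorial m : ℝ) /
        (Nat.factorial (k + 1 + m) * Nat.factorial (m - m) * Nat.factorial m)) * (-x) ^ m
      = ((k : ℝ) + 1) / ((k : ℝ) + m + 1) *
        (((Nat.factorial (k + m - m) * Nat.factorial m : ℝ) /
          (Nat.factorial (k + m) * Nat.factorial (m - m) * Nat.factorial m)) * (-x) ^ m) := by
    rw [show k + 1 + m - m = k + 1 from by omega, show k + m - m = k from by omega,
        Nat.sub_self, show k + 1 + m = (k + m) + 1 from by omega,
        factCastR (k + m), factCastR k]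
    have h2 := factNZ (k + m); have h4 := factNZ m; have h5 := factNZ k
    have h6 : ((k : ℝ) + m + 1) ≠ 0 := by positivity
    push_cast
    field_simp
  have hmain :
      (∑ j ∈ Finset.range m,
        ((Nat.factorial (k + 1 + m - j) * Nat.factorial m : ℝ) /
          (Nat.factorial (k + 1 + m) * Nat.factorial (m - j) * Nat.factorial j)) * (-x) ^ j)
      + (∑ j ∈ Finset.range m,
        ((Nat.factorial (k + 1 + m - (j + 1)) * Nat.factorial m : ℝ) /
          (Nat.factorial (k + 1 + m) * Nat.factorial (m - (j + 1)) * Nat.factorial (j + 1))) *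
            ((((j : ℕ) + 1 : ℝ) * (-x) ^ (j + 1 - 1)) * (-1)))
      = ∑ j ∈ Finset.range m,
        ((k : ℝ) + 1) / ((k : ℝ) + m + 1) *
          (((Nat.factorial (k + m - j) * Nat.factorial m : ℝ) /
            (Nat.factorial (k + m) * Nat.factorial (m - j) * Nat.factorial j)) * (-x) ^ j) := by
    rw [← Finset.sum_add_distrib]
    refine Finset.sum_congr rfl ?_
    intro j hj
    rw [Finset.mem_range] at hj
    obtain ⟨D, rfl⟩ : ∃ D, m = j + D + 1 := ⟨m - j - 1, by omega⟩
    rw [show k + 1 + (j + D + 1) - j = (k + D + 1) + 1 from by omega,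
        show j + D + 1 - j = D + 1 from by omega,
        show k + 1 + (j + D + 1) - (j + 1) = k + D + 1 from by omega,
        show j + D + 1 - (j + 1) = D from by omega,
        show k + 1 + (j + D + 1) = (k + (j + D + 1)) + 1 from by omega,
        show k + (j + D + 1) - j = k + D + 1 from by omega,
        Nat.add_sub_cancel,
        factCastR (k + D + 1), factCastR (k + (j + D + 1)), factCastR D, factCastR j]
    have h1 := factNZ (k + D + 1); have h2 := factNZ (k + (j + D + 1))
    have h3 := factNZ D; have h4 := factNZ j; have h5 := factNZ (j + D + 1)
    have h6 : ((k : ℝ) + (j + D + 1 : ℕ) + 1) ≠ 0 := by positivity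
    push_cast at h6 ⊢
    field_simp
    ring
  push_cast at hmain ⊢
  linarith [hmain, hlast]

private lemma keyQ0 (m : ℕ) (x : ℝ) :
    padeQ 0 m x +
      (∑ j ∈ Finset.range (m + 1),
        ((Nat.factorial (0 + m - j) * Nat.factorial m : ℝ) /
          (Nat.factorial (0 + m) * Nat.factorial (m - j) * Nat.factorial j)) *
            (((j : ℝ) * (-x) ^ (j - 1)) * (-1)))
    = (-x) ^ m / Nat.factorial m := by
  rw [Finset.sum_range_succ' (fun j => ((Nat.factorial (0 + m - j) * Nat.factorial m : ℝ) /
          (Nat.factorial (0 + m) * Nat.factorial (m - j) * Nat.factorial j)) *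
            (((j : ℝ) * (-x) ^ (j - 1)) * (-1)))]
  simp only [Nat.cast_zero, zero_mul, mul_zero, add_zero]
  rw [padeQ, Finset.sum_range_succ]
  have hlast :
      ((Nat.factorial (0 + m - m) * Nat.factorial m : ℝ) /
        (Nat.factorial (0 + m) * Nat.factorial (m - m) * Nat.factorial m)) * (-x) ^ m
      = (-x) ^ m / Nat.factorial m := by
    rw [show 0 + m - m = 0 from by omega, Nat.sub_self, Nat.zero_add]
    have h4 := factNZ m
    simp [Nat.factorial]
    field_simp
  have hmain :
      (∑ j ∈ Finset.range m,
        ((Nat.factorial (0 + m - j) * Nat.factorial m : ℝ) /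
          (Nat.factorial (0 + m) * Nat.factorial (m - j) * Nat.factorial j)) * (-x) ^ j)
      + (∑ j ∈ Finset.range m,
        ((Nat.factorial (0 + m - (j + 1)) * Nat.factorial m : ℝ) /
          (Nat.factorial (0 + m) * Nat.factorial (m - (j + 1)) * Nat.factorial (j + 1))) *
            ((((j : ℕ) + 1 : ℝ) * (-x) ^ (j + 1 - 1)) * (-1)))
      = 0 := by
    rw [← Finset.sum_add_distrib]
    refine Finset.sum_eq_zero ?_
    intro j hj
    rw [Finset.mem_range] at hj
    obtain ⟨D, rfl⟩ : ∃ D, m = j + D + 1 := ⟨m - j - 1, by omega⟩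
    rw [show 0 + (j + D + 1) - j = D + 1 from by omega,
        show j + D + 1 - j = D + 1 from by omega,
        show 0 + (j + D + 1) - (j + 1) = D from by omega,
        show j + D + 1 - (j + 1) = D from by omega,
        Nat.zero_add, Nat.add_sub_cancel,
        factCastR D, factCastR j]
    have h3 := factNZ D; have h4 := factNZ j; have h5 := factNZ (j + D + 1)
    field_simp
    ring
  push_cast at hmain ⊢
  linarith [hmain, hlast]

private lemma padeP_zero (m : ℕ) (x : ℝ) : padeP 0 m x = 1 := by
  rw [padeP]
  rw [Finset.sum_range_one]
  rw [show 0 + m - 0 = m from by omega, Nat.sub_self, Nat.zero_add]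
  have h4 := factNZ m
  simp [Nat.factorial]
  exact Nat.factorial_ne_zero m

private lemma contDiff_padeQ (k m : ℕ) : ContDiff ℝ (⊤ : ℕ∞) (fun x => padeQ k m x) := by
  simp only [padeQ]
  apply ContDiff.sum
  intro j _
  exact contDiff_const.mul (contDiff_id.neg.pow j)

private lemma contDiff_padeP (k m : ℕ) : ContDiff ℝ (⊤ : ℕ∞) (fun x => padeP k m x) := by
  simp only [padeP]
  apply ContDiff.sum
  intro j _
  exact contDiff_const.mul (contDiff_id.pow j)

private lemma contDiff_padeF (k m : ℕ) :
    ContDiff ℝ (⊤ : ℕ∞) (fun x : ℝ => Real.exp x * padeQ k m x - padeP k m x) :=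
  (Real.contDiff_exp.mul (contDiff_padeQ k m)).sub (contDiff_padeP k m)

private lemma iter_const_mul (n : ℕ) (c : ℝ) {f : ℝ → ℝ} (hf : ContDiff ℝ (⊤ : ℕ∞) f) (x : ℝ) :
    iteratedDeriv n (fun y => c * f y) x = c * iteratedDeriv n f x := by
  rw [← iteratedDerivWithin_univ, ← iteratedDerivWithin_univ]
  exact iteratedDerivWithin_const_mul (Set.mem_univ x) uniqueDiffOn_univ c
    ((hf.of_le (mod_cast le_top)).contDiffWithinAt)

private lemma iter_add_const_mul (n : ℕ) {f g : ℝ → ℝ} (hf : ContDiff ℝ (⊤ : ℕ∞) f)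
    (hg : ContDiff ℝ (⊤ : ℕ∞) g) (c : ℝ) (x : ℝ) :
    iteratedDeriv n (fun y => f y + c * g y) x
      = iteratedDeriv n f x + c * iteratedDeriv n g x := by
  have h1 : (fun y => f y + c * g y) = f + fun y => c * g y := rfl
  rw [h1, ← iteratedDerivWithin_univ, ← iteratedDerivWithin_univ, ← iteratedDerivWithin_univ,
    iteratedDerivWithin_add (Set.mem_univ x) uniqueDiffOn_univ
      ((hf.of_le (mod_cast le_top)).contDiffWithinAt) ((((hg.of_le (mod_cast le_top)).const_smul c).contDiffOn.congr
        (by intro y _; simp [smul_eq_mul])).contDiffWithinAt (Set.mem_univ x))]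
  congr 1
  rw [iteratedDerivWithin_const_mul (Set.mem_univ x) uniqueDiffOn_univ c
    ((hg.of_le (mod_cast le_top)).contDiffWithinAt)]

private lemma contDiff_expPow (m : ℕ) : ContDiff ℝ (⊤ : ℕ∞) (fun x : ℝ => Real.exp x * x ^ m) :=
  Real.contDiff_exp.mul (contDiff_id.pow m)

private lemma deriv_expPow (m : ℕ) :
    deriv (fun x : ℝ => Real.exp x * x ^ (m + 1))
      = fun x => Real.exp x * x ^ (m + 1) + ((m : ℝ) + 1) * (Real.exp x * x ^ m) := by
  funext x
  have h := (Real.hasDerivAt_exp x).mul (hasDerivAt_pow (m + 1) x)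
  rw [show deriv (fun x : ℝ => Real.exp x * x ^ (m + 1)) x = _ from h.deriv]
  simp only [Nat.add_sub_cancel]
  push_cast
  ring

private lemma iter_expPow_lt (n : ℕ) : ∀ m : ℕ, n < m →
    iteratedDeriv n (fun x : ℝ => Real.exp x * x ^ m) 0 = 0 := by
  induction n with
  | zero =>
    intro m hm
    rw [iteratedDeriv_zero]
    simp [zero_pow (by omega : m ≠ 0)]
  | succ n ih =>
    intro m hm
    obtain ⟨m', rfl⟩ : ∃ m', m = m' + 1 := ⟨m - 1, by omega⟩
    rw [iteratedDeriv_succ', deriv_expPow m',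
      iter_add_const_mul n (contDiff_expPow (m' + 1)) (contDiff_expPow m') _ 0,
      ih (m' + 1) (by omega), ih m' (by omega)]
    ring

private lemma iter_expPow_eq (m : ℕ) :
    iteratedDeriv m (fun x : ℝ => Real.exp x * x ^ m) 0 = Nat.factorial m := by
  induction m with
  | zero => rw [iteratedDeriv_zero]; simp
  | succ m ih =>
    rw [iteratedDeriv_succ', deriv_expPow m,
      iter_add_const_mul m (contDiff_expPow (m + 1)) (contDiff_expPow m) _ 0,
      iter_expPow_lt m (m + 1) (by omega), ih, factCastR m]
    ring

/-- The `(k+m+1)`-st derivative at `0` of `x ↦ eˣ q_{k,m}(x) − p_{k,m}(x)` equals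
`(−1)^m k! m! / (k+m)!`, which yields the leading error term
`(−1)^m k! m! / ((k+m)! (k+m+1)!) x^{k+m+1}` of the Padé approximant `r_{k,m}`. -/
theorem pade_leading_error (k m : ℕ) :
    iteratedDeriv (k + m + 1) (fun x : ℝ => Real.exp x * padeQ k m x - padeP k m x) 0 =
      (-1 : ℝ) ^ m * (Nat.factorial k : ℝ) * (Nat.factorial m : ℝ) /
        (Nat.factorial (k + m) : ℝ) := by
  induction k with
  | zero =>
    have hd : deriv (fun x : ℝ => Real.exp x * padeQ 0 m x - padeP 0 m x)
        = fun x : ℝ => ((-1 : ℝ) ^ m / Nat.factorial m) * (Real.exp x * x ^ m) := by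
      funext x
      have h := ((Real.hasDerivAt_exp x).mul (hasDerivAt_padeQ 0 m x)).sub
        (hasDerivAt_padeP 0 m x)
      rw [show deriv (fun x : ℝ => Real.exp x * padeQ 0 m x - padeP 0 m x) x = _ from h.deriv]
      have hP0 : (∑ j ∈ Finset.range (0 + 1),
          ((Nat.factorial (0 + m - j) * Nat.factorial 0 : ℝ) /
            (Nat.factorial (0 + m) * Nat.factorial (0 - j) * Nat.factorial j)) *
              ((j : ℝ) * x ^ (j - 1))) = 0 := by
        simp
      rw [hP0, sub_zero]
      have := keyQ0 m x
      have hx : Real.exp x * padeQ 0 m x +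
          Real.exp x * (∑ j ∈ Finset.range (m + 1),
            ((Nat.factorial (0 + m - j) * Nat.factorial m : ℝ) /
              (Nat.factorial (0 + m) * Nat.factorial (m - j) * Nat.factorial j)) *
                (((j : ℝ) * (-x) ^ (j - 1)) * (-1)))
          = Real.exp x * ((-x) ^ m / Nat.factorial m) := by
        rw [← mul_add, this]
      rw [hx, neg_pow]
      ring
    rw [show 0 + m + 1 = m + 1 from by omega, iteratedDeriv_succ', hd,
      iter_const_mul m _ (contDiff_expPow m) 0, iter_expPow_eq m]
    have h4 := factNZ m
    rw [show (0 : ℕ) + m = m from by omega]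
    simp [Nat.factorial]
    field_simp
  | succ k ih =>
    have hd : deriv (fun x : ℝ => Real.exp x * padeQ (k + 1) m x - padeP (k + 1) m x)
        = fun x : ℝ => ((k : ℝ) + 1) / ((k : ℝ) + m + 1) *
            (Real.exp x * padeQ k m x - padeP k m x) := by
      funext x
      have h := ((Real.hasDerivAt_exp x).mul (hasDerivAt_padeQ (k + 1) m x)).sub
        (hasDerivAt_padeP (k + 1) m x)
      rw [show deriv (fun x : ℝ => Real.exp x * padeQ (k + 1) m x - padeP (k + 1) m x) x = _
        from h.deriv]
      have hQ : Real.exp x * padeQ (k + 1) m x +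
          Real.exp x * (∑ j ∈ Finset.range (m + 1),
            ((Nat.factorial (k + 1 + m - j) * Nat.factorial m : ℝ) /
              (Nat.factorial (k + 1 + m) * Nat.factorial (m - j) * Nat.factorial j)) *
                (((j : ℝ) * (-x) ^ (j - 1)) * (-1)))
          = Real.exp x * (((k : ℝ) + 1) / ((k : ℝ) + m + 1) * padeQ k m x) := by
        rw [← mul_add, keyQ k m x]
      rw [keyP k m x, hQ]
      ring
    rw [show k + 1 + m + 1 = (k + m + 1) + 1 from by omega, iteratedDeriv_succ', hd,
      iter_const_mul (k + m + 1) _ (contDiff_padeF k m) 0, ih]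
    rw [show k + 1 + m = (k + m) + 1 from by omega, factCastR (k + m), factCastR k]
    have h2 := factNZ (k + m); have h5 := factNZ k; have h6 := factNZ m
    have h7 : ((k : ℝ) + m + 1) ≠ 0 := by positivity
    field_simp
    push_cast
    ring
end

section
/- Let A and J be N×N complex matrices such that Aᴴ·J + J·A = 0, and let p be an odd polynomial with real coefficients (p(−x) = −p(x)). Then the exponential of p(A) belongs to the quadratic Lie group associated with J: (e^{p(A)})ᴴ · J · e^{p(A)} = J. -/
/-! `Aᴴ J + J A = 0` says that `J` intertwines `A` with `-Aᴴ`: `J A = -Aᴴ J`. Intertwining passes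
to real polynomials, and `p(-Aᴴ) = -p(A)ᴴ` for odd `p`, so `p(A)` again lies in the Lie algebra
of `J`. It also passes to the exponential series, so `J e^B = e^{-Bᴴ} J` for every `B` in the Lie
algebra, which rearranges to `(e^B)ᴴ J e^B = J` since `e^{-Bᴴ}` inverts `(e^B)ᴴ`. -/

open Matrix Polynomial

theorem SemiconjBy.aeval {R A : Type*} [CommSemiring R] [Semiring A] [Algebra R A] {x a b : A}
    (h : SemiconjBy x a b) (p : R[X]) : SemiconjBy x (aeval a p) (aeval b p) := by
  induction p using Polynomial.induction_on' with
  | add p q hp hq => simpa only [map_add] using hp.add_right hq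
  | monomial n r =>
    simp only [aeval_monomial]
    exact SemiconjBy.mul_right (Algebra.commute_algebraMap_right r x) (h.pow_right n)

namespace Polynomial

theorem comp_neg_X_eq_neg_of_forall_eval_neg {R : Type*} [CommRing R] [IsDomain R] [Infinite R]
    {p : R[X]} (hp : ∀ x, p.eval (-x) = -p.eval x) : p.comp (-X) = -p :=
  Polynomial.funext fun x ↦ by simp [hp]

theorem aeval_neg_of_comp_neg_X_eq_neg {R A : Type*} [CommRing R] [Ring A] [Algebra R A]
    {p : R[X]} (hp : p.comp (-X) = -p) (a : A) : aeval (-a) p = -aeval a p := by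
  rw [← map_neg, ← hp, aeval_comp, map_neg, aeval_X]

theorem star_aeval {R A : Type*} [CommSemiring R] [StarRing R] [TrivialStar R] [Semiring A]
    [StarRing A] [Algebra R A] [StarModule R A] (a : A) (p : R[X]) :
    star (aeval a p) = aeval (star a) p := by
  simp only [aeval_eq_sum_range, star_sum, star_smul, star_pow, star_trivial]

end Polynomial

theorem star_aeval_mul_add_mul_aeval_eq_zero {R A : Type*} [CommRing R] [StarRing R]
    [TrivialStar R] [Ring A] [StarRing A] [Algebra R A] [StarModule R A] {a j : A}
    (h : star a * j + j * a = 0) {p : R[X]} (hp : p.comp (-X) = -p) :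
    star (aeval a p) * j + j * aeval a p = 0 := by
  have hj : SemiconjBy j a (-star a) := by
    rw [SemiconjBy, neg_mul, eq_neg_iff_add_eq_zero, add_comm, h]
  have hjp : j * aeval a p = -(star (aeval a p) * j) := by
    simpa only [SemiconjBy, aeval_neg_of_comp_neg_X_eq_neg hp, ← star_aeval, neg_mul]
      using hj.aeval p
  rw [hjp, add_neg_cancel]

theorem Matrix.conjTranspose_exp_mul_mul_exp_eq_self {m 𝔸 : Type*} [Fintype m] [DecidableEq m]
    [NormedRing 𝔸] [NormedAlgebra ℚ 𝔸] [CompleteSpace 𝔸] [StarRing 𝔸] [ContinuousStar 𝔸]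
    {A J : Matrix m m 𝔸} (h : Aᴴ * J + J * A = 0) :
    (NormedSpace.exp A)ᴴ * J * NormedSpace.exp A = J := by
  have hJ : SemiconjBy J A (-Aᴴ) := by
    rw [SemiconjBy, neg_mul, eq_neg_iff_add_eq_zero, add_comm, h]
  rw [← Matrix.exp_conjTranspose]
  let : NormedRing (Matrix m m 𝔸) := Matrix.linftyOpNormedRing
  let : NormedAlgebra ℚ (Matrix m m 𝔸) := Matrix.linftyOpNormedAlgebra
  -- The operator-norm uniformity is the product uniformity only after unfolding definitions.
  have : @CompleteSpace (Matrix m m 𝔸) PseudoMetricSpace.toUniformSpace :=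
    inferInstanceAs (CompleteSpace (m → m → 𝔸))
  have key := hJ.exp_neg_mul_mul_exp_eq_self
  rw [neg_neg] at key
  exact key

/-- If `A` belongs to the quadratic Lie algebra of `J` and `p` is an odd real
polynomial, then `e^{p(A)}` belongs to the quadratic Lie group of `J`. -/
theorem exp_odd_poly_mem_quadratic_lie_group (N : ℕ) (A J : Matrix (Fin N) (Fin N) ℂ)
    (hA : Aᴴ * J + J * A = 0) (p : Polynomial ℝ)
    (hodd : ∀ x : ℝ, p.eval (-x) = -p.eval x) :
    (NormedSpace.exp (Polynomial.aeval A p))ᴴ * J * NormedSpace.exp (Polynomial.aeval A p) = J :=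
  Matrix.conjTranspose_exp_mul_mul_exp_eq_self <|
    star_aeval_mul_add_mul_aeval_eq_zero hA (comp_neg_X_eq_neg_of_forall_eval_neg hodd)
end
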